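/- Bound on environment chains: let G=(A,B,F) be a parameterized vector game and let C be a configuration whose total number of environment tokens is k_e (i.e., Σ_{ℓ∈L} C(ℓ,e) = k_e) and whose total number of mixed tokens is k_se (i.e., Σ_{ℓ∈L} C(ℓ,se) = k_se). Then every chain C = C_0 <_e C_1 <_e … <_e C_d has length d ≤ (k_e + k_se)·|A_e|·B. -/

import Mathlib

namespace PSyn

/-! ### Basic objects: types, alphabets, processes, events, executions -/

/-- The three process types: system, environment, mixed. -/
inductive PType where
  | s | e | se
deriving DecidableEq

/-- A finite alphabet: letters are the naturals `0, …, n-1`;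
`sys a = true` means `a` is a system action (`a ∈ A_s`), otherwise `a ∈ A_e`. -/
structure Alphabet where
  n : ℕ
  sys : ℕ → Bool

/-- An event is a pair (letter, process identity). -/
abbrev Event := ℕ × ℕ

/-- A process triple `P = (P_s, P_e, P_se)`: pairwise disjoint finite sets of processes. -/
structure ProcTriple where
  Ps : Finset ℕ
  Pe : Finset ℕ
  Pse : Finset ℕ
  disj_se : Disjoint Ps Pe
  disj_sse : Disjoint Ps Pse
  disj_ese : Disjoint Pe Pse

def ProcTriple.ofType (P : ProcTriple) : PType → Finset ℕ
  | .s => P.Ps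
  | .e => P.Pe
  | .se => P.Pse

def ProcTriple.all (P : ProcTriple) : Finset ℕ := P.Ps ∪ P.Pe ∪ P.Pse

/-- `σ ∈ Σ_s = A_s × (P_s ∪ P_se)`. -/
def isSysEvent (Alph : Alphabet) (P : ProcTriple) (σ : Event) : Prop :=
  σ.1 < Alph.n ∧ Alph.sys σ.1 = true ∧ (σ.2 ∈ P.Ps ∨ σ.2 ∈ P.Pse)

/-- `σ ∈ Σ_e = A_e × (P_e ∪ P_se)`. -/
def isEnvEvent (Alph : Alphabet) (P : ProcTriple) (σ : Event) : Prop :=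
  σ.1 < Alph.n ∧ Alph.sys σ.1 = false ∧ (σ.2 ∈ P.Pe ∨ σ.2 ∈ P.Pse)

def isEvent (Alph : Alphabet) (P : ProcTriple) (σ : Event) : Prop :=
  isSysEvent Alph P σ ∨ isEnvEvent Alph P σ

/-- A finite or infinite word over events. -/
inductive Exec where
  | fin : List Event → Exec
  | inf : (ℕ → Event) → Exec

/-- A `P`-execution: every event is an event of `P` over the alphabet. -/
def Exec.valid (Alph : Alphabet) (P : ProcTriple) : Exec → Prop
  | .fin l => ∀ σ ∈ l, isEvent Alph P σ
  | .inf g => ∀ i, isEvent Alph P (g i)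

def Exec.at? : Exec → ℕ → Option Event
  | .fin l, i => l[i]?
  | .inf g, i => some (g i)

/-- The set of positions of an execution. -/
def Exec.posDom : Exec → ℕ → Prop
  | .fin l, i => i < l.length
  | .inf _, _ => True

/-- Elements of the structure associated with `(P, w)`:
`inl p` is a process, `inr i` is a position. -/
abbrev Elem := ℕ ⊕ ℕ

/-- The universe `P ⊎ Pos(w)`. -/
def elemDom (P : ProcTriple) (w : Exec) : Elem → Prop
  | .inl p => p ∈ P.all
  | .inr i => w.posDom i

/-- The process an element belongs to (a process belongs to itself; a position
to the process executing it).  Two elements are `∼`-equivalent iff they have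
the same process. -/
def procOf (w : Exec) : Elem → Option ℕ
  | .inl p => some p
  | .inr i => (w.at? i).map Prod.snd

def letterOf (w : Exec) : Elem → Option ℕ
  | .inl _ => none
  | .inr i => (w.at? i).map Prod.fst

/-! ### First-order logic FO_A[∼,<,+1] -/

/-- Syntax of `FO_A[∼,<,+1]`; variables are naturals, letters are naturals. -/
inductive FO where
  | ptype : PType → ℕ → FO
  | letter : ℕ → ℕ → FO
  | eq : ℕ → ℕ → FO
  | sim : ℕ → ℕ → FO
  | lt : ℕ → ℕ → FO
  | succ : ℕ → ℕ → FO
  | not : FO → FO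
  | or : FO → FO → FO
  | ex : ℕ → FO → FO

/-- Satisfaction of a formula in the structure `S_(P,w)` under a valuation. -/
def Sat (P : ProcTriple) (w : Exec) : (ℕ → Elem) → FO → Prop
  | v, .ptype θ x => ∃ p, v x = Sum.inl p ∧ p ∈ P.ofType θ
  | v, .letter a x => letterOf w (v x) = some a
  | v, .eq x y => v x = v y
  | v, .sim x y => (procOf w (v x)).isSome ∧ procOf w (v x) = procOf w (v y)
  | v, .lt x y => ∃ i j, v x = Sum.inr i ∧ v y = Sum.inr j ∧ i < j ∧ w.posDom j
  | v, .succ x y => ∃ i, v x = Sum.inr i ∧ v y = Sum.inr (i + 1) ∧ w.posDom (i + 1)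
  | v, .not φ => ¬ Sat P w v φ
  | v, .or φ ψ => Sat P w v φ ∨ Sat P w v ψ
  | v, .ex x φ => ∃ u : Elem, elemDom P w u ∧ Sat P w (Function.update v x u) φ

/-- Satisfaction for sentences: `(P,w) ⊨ φ` (the valuation is irrelevant for sentences). -/
def SatS (P : ProcTriple) (w : Exec) (φ : FO) : Prop :=
  Sat P w (fun _ => Sum.inl 0) φ

def FO.free : FO → Finset ℕ
  | .ptype _ x => {x}
  | .letter _ x => {x}
  | .eq x y => {x, y}
  | .sim x y => {x, y}
  | .lt x y => {x, y}
  | .succ x y => {x, y}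
  | .not φ => φ.free
  | .or φ ψ => φ.free ∪ ψ.free
  | .ex x φ => φ.free.erase x

/-- A sentence has no free variables. -/
def FO.isSentence (φ : FO) : Prop := φ.free = ∅

def FO.vars : FO → Finset ℕ
  | .ptype _ x => {x}
  | .letter _ x => {x}
  | .eq x y => {x, y}
  | .sim x y => {x, y}
  | .lt x y => {x, y}
  | .succ x y => {x, y}
  | .not φ => φ.vars
  | .or φ ψ => φ.vars ∪ ψ.vars
  | .ex x φ => insert x φ.vars

/-- The two-variable fragment: only the variable names `0` and `1` are used. -/
def FO.twoVar (φ : FO) : Prop := φ.vars ⊆ ({0, 1} : Finset ℕ)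

/-- The fragment `FO_A[∼]`: neither `<` nor `+1` occurs. -/
def FO.onlySim : FO → Prop
  | .lt _ _ => False
  | .succ _ _ => False
  | .not φ => φ.onlySim
  | .or φ ψ => φ.onlySim ∧ ψ.onlySim
  | .ex _ φ => φ.onlySim
  | _ => True

/-! ### The asynchronous synthesis game and `Win(φ)` -/

/-- A `P`-strategy for System: `none` plays ε, `some σ` proposes the system event `σ`. -/
abbrev Strategy := List Event → Option Event

/-- The strategy only proposes system events (its codomain is `Σ_s ∪ {ε}`). -/
def properStrategy (Alph : Alphabet) (P : ProcTriple) (f : Strategy) : Prop :=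
  ∀ u σ, f u = some σ → isSysEvent Alph P σ

/-- The prefix of length `i` of an execution. -/
def Exec.pre : Exec → ℕ → List Event
  | .fin l, i => l.take i
  | .inf g, i => (List.range i).map g

/-- `w` is `f`-compatible: every system event of `w` is the one proposed by `f`. -/
def compatible (Alph : Alphabet) (P : ProcTriple) (f : Strategy) (w : Exec) : Prop :=
  ∀ i σ, w.at? i = some σ → isSysEvent Alph P σ → f (w.pre i) = some σ

/-- `w` is `f`-fair. -/
def fair (Alph : Alphabet) (P : ProcTriple) (f : Strategy) : Exec → Prop
  | .fin l => f l = none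
  | .inf g =>
      {i : ℕ | f (Exec.pre (Exec.inf g) i) ≠ none}.Infinite →
      {j : ℕ | isSysEvent Alph P (g j)}.Infinite

/-- `f` is `P`-winning for `φ`. -/
def winningStrategy (Alph : Alphabet) (P : ProcTriple) (φ : FO) (f : Strategy) : Prop :=
  properStrategy Alph P f ∧
  ∀ w : Exec, w.valid Alph P → compatible Alph P f w → fair Alph P f w → SatS P w φ

/-- Triples of naturals, indexed by the process types (s, e, se). -/
abbrev Tok := ℕ × ℕ × ℕ

/-- `Win(φ)`: the set of triples `(k_s, k_e, k_se)` admitting a winning System strategy. -/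
def WinFO (Alph : Alphabet) (φ : FO) : Set Tok :=
  { k | ∃ P : ProcTriple,
      P.Ps.card = k.1 ∧ P.Pe.card = k.2.1 ∧ P.Pse.card = k.2.2 ∧
      ∃ f : Strategy, winningStrategy Alph P φ f }

/-! ### Parameterized vector games -/

/-- Locations: `L = {0,…,B}^A`. -/
abbrev Loc (n B : ℕ) := Fin n → Fin (B + 1)

/-- A local acceptance condition: for each process type a pair `(⋈, n)`,
where the Boolean `true` stands for `=` and `false` for `≥`. -/
abbrev LCond := (Bool × ℕ) × (Bool × ℕ) × (Bool × ℕ)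

/-- Configurations: `C : L → ℕ^T`. -/
abbrev GConfig (n B : ℕ) := Loc n B → Tok

/-- Transitions: maps `L × L → ℕ^T`. -/
abbrev GTrans (n B : ℕ) := Loc n B → Loc n B → Tok

/-- A parameterized vector game `G = (A, B, F)`. -/
structure PVG where
  Alph : Alphabet
  B : ℕ
  F : List (Loc Alph.n B → LCond)

def cmpHolds (c : Bool × ℕ) (m : ℕ) : Prop := if c.1 then m = c.2 else c.2 ≤ m

def lcondHolds (κ : LCond) (t : Tok) : Prop :=
  cmpHolds κ.1 t.1 ∧ cmpHolds κ.2.1 t.2.1 ∧ cmpHolds κ.2.2 t.2.2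

/-- `C ⊨ F`. -/
def accept (G : PVG) (C : GConfig G.Alph.n G.B) : Prop :=
  ∃ κ ∈ G.F, ∀ ℓ, lcondHolds (κ ℓ) (C ℓ)

/-- `ℓ + a`: increase coordinate `a` by one, capped at `B`. -/
def locAdd {n B : ℕ} (ℓ : Loc n B) (a : ℕ) : Loc n B :=
  fun i =>
    if (i : ℕ) = a then ⟨min ((ℓ i : ℕ) + 1) B, Nat.lt_succ_of_le (min_le_right _ _)⟩
    else ℓ i

/-- `ℓ + w` for a finite word `w` over the alphabet. -/
def locAddW {n B : ℕ} (ℓ : Loc n B) : List ℕ → Loc n B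
  | [] => ℓ
  | a :: u => locAddW (locAdd ℓ a) u

def isSysWord (Alph : Alphabet) (u : List ℕ) : Prop :=
  ∀ a ∈ u, a < Alph.n ∧ Alph.sys a = true

def isEnvWord (Alph : Alphabet) (u : List ℕ) : Prop :=
  ∀ a ∈ u, a < Alph.n ∧ Alph.sys a = false

/-- System transitions: values in `ℕ × {0} × ℕ` and moves along system words. -/
def isSysTrans (G : PVG) (τ : GTrans G.Alph.n G.B) : Prop :=
  ∀ ℓ ℓ', (τ ℓ ℓ').2.1 = 0 ∧
    (τ ℓ ℓ' ≠ ((0, 0, 0) : Tok) → ∃ u : List ℕ, isSysWord G.Alph u ∧ ℓ' = locAddW ℓ u)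

/-- Environment transitions: values in `{0} × ℕ × ℕ` and moves along environment words. -/
def isEnvTrans (G : PVG) (τ : GTrans G.Alph.n G.B) : Prop :=
  ∀ ℓ ℓ', (τ ℓ ℓ').1 = 0 ∧
    (τ ℓ ℓ' ≠ ((0, 0, 0) : Tok) → ∃ u : List ℕ, isEnvWord G.Alph u ∧ ℓ' = locAddW ℓ u)

def outm {n B : ℕ} (τ : GTrans n B) (ℓ : Loc n B) : Tok := ∑ ℓ' : Loc n B, τ ℓ ℓ'

def inm {n B : ℕ} (τ : GTrans n B) (ℓ : Loc n B) : Tok := ∑ ℓ' : Loc n B, τ ℓ' ℓ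

/-- Componentwise order on `ℕ^T`. -/
def tokLe (s t : Tok) : Prop := s.1 ≤ t.1 ∧ s.2.1 ≤ t.2.1 ∧ s.2.2 ≤ t.2.2

def applicable {n B : ℕ} (τ : GTrans n B) (C : GConfig n B) : Prop :=
  ∀ ℓ, tokLe (outm τ ℓ) (C ℓ)

/-- `τ(C)(ℓ) = C(ℓ) − out_τ(ℓ) + in_τ(ℓ)` (componentwise). -/
def applyT {n B : ℕ} (τ : GTrans n B) (C : GConfig n B) : GConfig n B :=
  fun ℓ => C ℓ - outm τ ℓ + inm τ ℓ

/-- The configuration reached from `C0` after applying the transitions `ts` in order. -/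
def confAt {n B : ℕ} (C0 : GConfig n B) (ts : List (GTrans n B)) : GConfig n B :=
  ts.foldl (fun C τ => applyT τ C) C0

/-- A valid `C0`-play, represented by its list of transitions
(step `i`, 0-based, is System's if `i` is even, Environment's if `i` is odd). -/
def validPlay (G : PVG) (C0 : GConfig G.Alph.n G.B)
    (ts : List (GTrans G.Alph.n G.B)) : Prop :=
  ∀ i (h : i < ts.length),
    applicable (ts.get ⟨i, h⟩) (confAt C0 (ts.take i)) ∧
    (i % 2 = 0 → isSysTrans G (ts.get ⟨i, h⟩) ∧ accept G (confAt C0 (ts.take (i + 1)))) ∧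
    (i % 2 = 1 → isEnvTrans G (ts.get ⟨i, h⟩) ∧ ¬ accept G (confAt C0 (ts.take (i + 1))))

/-- A strategy for System in the game: a partial map from plays to transitions. -/
abbrev GStrat (n B : ℕ) := List (GTrans n B) → Option (GTrans n B)

/-- `f(C)` is defined, and whenever `f(π) = τ` for a valid play π ending in `C_i`,
`τ` is a system transition, applicable at `C_i`, and `τ(C_i) ⊨ F`. -/
def properGStrat (G : PVG) (C0 : GConfig G.Alph.n G.B) (f : GStrat G.Alph.n G.B) : Prop :=
  (f []).isSome ∧
  ∀ ts τ, validPlay G C0 ts → f ts = some τ →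
    isSysTrans G τ ∧ applicable τ (confAt C0 ts) ∧ accept G (applyT τ (confAt C0 ts))

def gCompatible {n B : ℕ} (f : GStrat n B) (ts : List (GTrans n B)) : Prop :=
  ∀ i (h : i < ts.length), i % 2 = 0 → f (ts.take i) = some (ts.get ⟨i, h⟩)

def gMaximal (G : PVG) (C0 : GConfig G.Alph.n G.B) (f : GStrat G.Alph.n G.B)
    (ts : List (GTrans G.Alph.n G.B)) : Prop :=
  ¬ ∃ ts', ts <+: ts' ∧ ts ≠ ts' ∧ validPlay G C0 ts' ∧ gCompatible f ts'

def winningGStrat (G : PVG) (C0 : GConfig G.Alph.n G.B) (f : GStrat G.Alph.n G.B) : Prop :=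
  properGStrat G C0 f ∧
  ∀ ts, validPlay G C0 ts → gCompatible f ts → gMaximal G C0 f ts →
    accept G (confAt C0 ts)

/-- A configuration is winning for System if System has a winning strategy from it. -/
def winningConf (G : PVG) (C0 : GConfig G.Alph.n G.B) : Prop :=
  ∃ f, winningGStrat G C0 f

/-- The all-zero location `ℓ_0`. -/
def loc0 (n B : ℕ) : Loc n B := fun _ => 0

/-- `C_k⃗`: all `k⃗` tokens on `ℓ_0`. -/
def initConfig {n B : ℕ} (k : Tok) : GConfig n B :=
  Function.update (fun _ => ((0, 0, 0) : Tok)) (loc0 n B) k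

/-- `Win(G)`. -/
def WinG (G : PVG) : Set Tok :=
  { k | winningConf G (initConfig k) }

/-! ### Environment chains and constants of a game -/

/-- `C <_e C'`. -/
def envStep (G : PVG) (C C' : GConfig G.Alph.n G.B) : Prop :=
  C ≠ C' ∧ ∃ τ, isEnvTrans G τ ∧ applicable τ C ∧ C' = applyT τ C

/-- There is a chain `C = C_0 <_e C_1 <_e … <_e C_d`. -/
def hasChain (G : PVG) (C : GConfig G.Alph.n G.B) (d : ℕ) : Prop :=
  ∃ cs : ℕ → GConfig G.Alph.n G.B, cs 0 = C ∧ ∀ i < d, envStep G (cs i) (cs (i + 1))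

/-- `C ∈ Conf_d`: the longest `<_e`-chain starting in `C` has length exactly `d`. -/
def ConfD (G : PVG) (C : GConfig G.Alph.n G.B) (d : ℕ) : Prop :=
  hasChain G C d ∧ ¬ hasChain G C (d + 1)

def lcondMax (κ : LCond) : ℕ := max κ.1.2 (max κ.2.1.2 κ.2.2.2)

/-- `K`: the largest constant occurring in the acceptance condition `F`. -/
def maxConst (G : PVG) : ℕ :=
  (G.F.map fun κ => Finset.univ.sup fun ℓ : Loc G.Alph.n G.B => lcondMax (κ ℓ)).foldr max 0

/-- `|A_e|`: the number of environment letters. -/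
def envCard (Alph : Alphabet) : ℕ :=
  ((Finset.range Alph.n).filter fun a => Alph.sys a = false).card

/-- `|L| = (B+1)^|A|`. -/
def numLoc (G : PVG) : ℕ := (G.B + 1) ^ G.Alph.n

/-! ### Cutoffs -/

/-- `k⃗_0` is a cutoff of `W` with respect to `(N_s, N_e, N_se)`. -/
def IsCutoff (Ns Ne Nse : Set ℕ) (W : Set Tok) (k0 : Tok) : Prop :=
  k0.1 ∈ Ns ∧ k0.2.1 ∈ Ne ∧ k0.2.2 ∈ Nse ∧
  ((∀ k : Tok, k.1 ∈ Ns → k.2.1 ∈ Ne → k.2.2 ∈ Nse →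
      k0.1 ≤ k.1 → k0.2.1 ≤ k.2.1 → k0.2.2 ≤ k.2.2 → k ∈ W) ∨
   (∀ k : Tok, k.1 ∈ Ns → k.2.1 ∈ Ne → k.2.2 ∈ Nse →
      k0.1 ≤ k.1 → k0.2.1 ≤ k.2.1 → k0.2.2 ≤ k.2.2 → k ∉ W))

/-! ### Counting formulas and the normal form for FO[∼] -/

def FO.and (φ ψ : FO) : FO := FO.not (FO.or (FO.not φ) (FO.not ψ))

def FO.imp (φ ψ : FO) : FO := FO.or (FO.not φ) ψ

def FO.iff (φ ψ : FO) : FO := FO.and (φ.imp ψ) (ψ.imp φ)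

def FO.all (x : ℕ) (φ : FO) : FO := FO.not (FO.ex x (FO.not φ))

def trueFO : FO := FO.eq 0 0

def bigAnd (l : List FO) : FO := l.foldr FO.and trueFO

def bigOr (l : List FO) : FO := l.foldr FO.or (FO.not trueFO)

/-- `∃^{≥m} y. (mk y)`: there are at least `m` distinct witnesses; the witness
variables are `base, base+1, …, base+m-1`. -/
def exGe (m base : ℕ) (mk : ℕ → FO) : FO :=
  let distinct : List FO :=
    (List.range m).flatMap fun i =>
      ((List.range m).filter fun j => decide (i < j)).map fun j =>
        FO.not (FO.eq (base + i) (base + j))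
  let body : FO :=
    FO.and (bigAnd distinct) (bigAnd ((List.range m).map fun i => mk (base + i)))
  ((List.range m).map (base + ·)).foldr FO.ex body

/-- `∃^{=m} y. (mk y) := ∃^{≥m} y. (mk y) ∧ ¬ ∃^{≥m+1} y. (mk y)`. -/
def exEq (m base : ℕ) (mk : ℕ → FO) : FO :=
  FO.and (exGe m base mk) (FO.not (exGe (m + 1) base mk))

/-- `ψ_{B,ℓ}(y)`: in the class of `y`, each letter `a` occurs exactly `ℓ(a)` times
if `ℓ(a) < B`, and at least `ℓ(a)` times if `ℓ(a) = B`. -/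
def psiCount (n B : ℕ) (ℓ : ℕ → ℕ) (y : ℕ) : FO :=
  bigAnd ((List.range n).map fun a =>
    if ℓ a < B then
      exEq (ℓ a) (y + 1) (fun z => FO.and (FO.sim y z) (FO.letter a z))
    else
      exGe (ℓ a) (y + 1) (fun z => FO.and (FO.sim y z) (FO.letter a z)))

/-- `∃^{⋈m} y. (θ(y) ∧ ψ_{B,ℓ}(y))`, where `⋈` is `=` if `isEq` and `≥` otherwise. -/
def nfAtom (n B : ℕ) (isEq : Bool) (m : ℕ) (θ : PType) (ℓ : ℕ → ℕ) : FO :=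
  let mk : ℕ → FO := fun y => FO.and (FO.ptype θ y) (psiCount n B ℓ y)
  if isEq then exEq m 0 mk else exGe m 0 mk

/-! ### The normalized synthesis problem -/

/-- A normalized strategy: maps finite executions to finite system words. -/
abbrev NormStrategy := List Event → Option (List Event)

/-- A normalized `P`-execution, given by its block decomposition `bs`
(`bs[j]` with `j` even is a System block, `j` odd an Environment block;
this corresponds to the 1-based indexing `w = w_1 … w_n` of the paper). -/
def NormExec (Alph : Alphabet) (P : ProcTriple) (φ : FO) (bs : List (List Event)) : Prop :=
  1 ≤ bs.length ∧
  ∀ j (h : j < bs.length),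
    (j % 2 = 0 → (∀ σ ∈ bs.get ⟨j, h⟩, isSysEvent Alph P σ) ∧
        SatS P (Exec.fin ((bs.take (j + 1)).flatten)) φ) ∧
    (j % 2 = 1 → (∀ σ ∈ bs.get ⟨j, h⟩, isEnvEvent Alph P σ) ∧
        ¬ SatS P (Exec.fin ((bs.take (j + 1)).flatten)) φ)

/-- Properness of a normalized strategy: `f(ε)` is defined, outputs are system
words, and `(P, w · f(w)) ⊨ φ` whenever `f(w)` is defined. -/
def properNStrat (Alph : Alphabet) (P : ProcTriple) (φ : FO) (f : NormStrategy) : Prop :=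
  (f []).isSome ∧
  ∀ w u, f w = some u →
    (∀ σ ∈ u, isSysEvent Alph P σ) ∧ SatS P (Exec.fin (w ++ u)) φ

def nCompatible (f : NormStrategy) (bs : List (List Event)) : Prop :=
  ∀ j (h : j < bs.length), j % 2 = 0 → f ((bs.take j).flatten) = some (bs.get ⟨j, h⟩)

def nMaximal (Alph : Alphabet) (P : ProcTriple) (φ : FO) (f : NormStrategy)
    (bs : List (List Event)) : Prop :=
  ¬ ∃ bs', bs <+: bs' ∧ bs ≠ bs' ∧ NormExec Alph P φ bs' ∧ nCompatible f bs'

def winningNStrategy (Alph : Alphabet) (P : ProcTriple) (φ : FO) (f : NormStrategy) : Prop :=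
  properNStrat Alph P φ f ∧
  ∀ bs, NormExec Alph P φ bs → nCompatible f bs → nMaximal Alph P φ f bs →
    SatS P (Exec.fin bs.flatten) φ

/-- `NWin(φ)`. -/
def NWin (Alph : Alphabet) (φ : FO) : Set Tok :=
  { k | ∃ P : ProcTriple,
      P.Ps.card = k.1 ∧ P.Pe.card = k.2.1 ∧ P.Pse.card = k.2.2 ∧
      ∃ f : NormStrategy, winningNStrategy Alph P φ f }

/-! ### Concrete alphabet and formulas of the examples -/

/-- The alphabet with `A_s = {a, b} = {0, 1}` and `A_e = {c, d} = {2, 3}`. -/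
def alph4 : Alphabet := ⟨4, fun a => decide (a < 2)⟩

/-- `φ_1 = ∀x.((s(x) ∨ se(x)) → ∃y.(x∼y ∧ (a(y) ∨ b(y))))`. -/
def phi1 : FO :=
  FO.all 0 (FO.imp (FO.or (FO.ptype .s 0) (FO.ptype .se 0))
    (FO.ex 1 (FO.and (FO.sim 0 1) (FO.or (FO.letter 0 1) (FO.letter 1 1)))))

/-- `φ_4 = ∀x.((∃^{=2}y.(x∼y ∧ a(y))) ↔ (∃^{=2}y.(x∼y ∧ d(y))))`. -/
def phi4 : FO :=
  FO.all 0 (FO.iff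
    (exEq 2 1 fun y => FO.and (FO.sim 0 y) (FO.letter 0 y))
    (exEq 2 1 fun y => FO.and (FO.sim 0 y) (FO.letter 3 y)))

/-- Vectors `{0,…,3}^{4}` as functions `ℕ → ℕ`. -/
def vec4 (v0 v1 v2 v3 : ℕ) : ℕ → ℕ := fun i => [v0, v1, v2, v3].getD i 0

def allVecs4 : List (ℕ → ℕ) :=
  (List.range 4).flatMap fun v0 =>
    (List.range 4).flatMap fun v1 =>
      (List.range 4).flatMap fun v2 =>
        (List.range 4).map fun v3 => vec4 v0 v1 v2 v3

/-- `Z`: vectors with `ℓ(a) = 2 ≠ ℓ(d)` or `ℓ(d) = 2 ≠ ℓ(a)` (letters `a = 0`, `d = 3`). -/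
def Zvecs : List (ℕ → ℕ) :=
  allVecs4.filter fun ℓ => decide ((ℓ 0 = 2 ∧ ℓ 3 ≠ 2) ∨ (ℓ 3 = 2 ∧ ℓ 0 ≠ 2))

/-- `φ_4' = ⋀_{θ ∈ T, ℓ ∈ Z} ∃^{=0} y.(θ(y) ∧ ψ_{3,ℓ}(y))`. -/
def phi4' : FO :=
  bigAnd (([PType.s, PType.e, PType.se].flatMap fun θ =>
    Zvecs.map fun ℓ => nfAtom 4 3 true 0 θ ℓ))

/-! ### Effective encodings of inputs (for decidability statements) -/

def decodePType (k : ℕ) : PType :=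
  if k % 3 = 0 then .s else if k % 3 = 1 then .e else .se

/-- Surjective decoding of formulas from naturals (with fuel). -/
def decodeFOAux : ℕ → ℕ → FO
  | 0, _ => FO.eq 0 0
  | fuel + 1, c =>
    let t := c % 9
    let m := c / 9
    let a := m.unpair.1
    let b := m.unpair.2
    if t = 0 then FO.ptype (decodePType a) b
    else if t = 1 then FO.letter a b
    else if t = 2 then FO.eq a b
    else if t = 3 then FO.sim a b
    else if t = 4 then FO.lt a b
    else if t = 5 then FO.succ a b
    else if t = 6 then FO.not (decodeFOAux fuel m)
    else if t = 7 then FO.or (decodeFOAux fuel a) (decodeFOAux fuel b)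
    else FO.ex a (decodeFOAux fuel b)

def decodeFO (c : ℕ) : FO := decodeFOAux c c

/-- Decoding an input of the synthesis/satisfiability problems: an alphabet
(size and partition) together with a formula. -/
def decodeFOInput (c : ℕ) : Alphabet × FO :=
  (⟨c.unpair.1.unpair.1, fun a => (c.unpair.1.unpair.2).testBit a⟩, decodeFO c.unpair.2)

def decodeBN (m : ℕ) : Bool × ℕ := (decide (m % 2 = 0), m / 2)

def decodeLCond (m : ℕ) : LCond :=
  (decodeBN m.unpair.1, decodeBN m.unpair.2.unpair.1, decodeBN m.unpair.2.unpair.2)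

/-- An explicit index of a location, used to decode local acceptance conditions. -/
def locIndex {n B : ℕ} (ℓ : Loc n B) : ℕ := ∑ i : Fin n, (ℓ i : ℕ) * (B + 1) ^ (i : ℕ)

/-- Decoding a parameterized vector game from a natural number. -/
def decodeGame (c : ℕ) : PVG :=
  let n := c.unpair.1.unpair.1
  let sy := c.unpair.1.unpair.2
  let B := c.unpair.2.unpair.1
  let Fc := c.unpair.2.unpair.2
  { Alph := ⟨n, fun a => sy.testBit a⟩
    B := B
    F := (Denumerable.ofNat (List ℕ) Fc).map fun kc =>
      fun ℓ => decodeLCond ((Denumerable.ofNat (List ℕ) kc).getD (locIndex ℓ) 0) }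

/-!
Every environment token on location `ℓ` can still advance at most `w(ℓ) = Σ_{a ∈ A_e} (B - ℓ(a))`
times, and `w(ℓ) ≤ |A_e|·B`. The potential `Σ_ℓ (C(ℓ,e) + C(ℓ,se))·w(ℓ)` is therefore at most
`(k_e + k_se)·|A_e|·B`, and it strictly decreases along `<_e`: an environment transition only moves
tokens along environment words, which never increase `w`, and a transition that changes the
configuration must move some token to a different location, which strictly decreases `w`.
-/

section ChainBound

open Finset

variable {n B : ℕ}

lemma le_locAdd (ℓ : Loc n B) (a : ℕ) (i : Fin n) : (ℓ i : ℕ) ≤ locAdd ℓ a i := by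
  unfold locAdd
  split
  · exact le_min (Nat.le_succ _) (Nat.lt_succ_iff.mp (ℓ i).isLt)
  · exact le_rfl

lemma le_locAddW (ℓ : Loc n B) (u : List ℕ) (i : Fin n) : (ℓ i : ℕ) ≤ locAddW ℓ u i := by
  induction u generalizing ℓ with
  | nil => exact le_rfl
  | cons a u ih => exact (le_locAdd ℓ a i).trans (ih (locAdd ℓ a))

lemma locAddW_apply_of_notMem (ℓ : Loc n B) {u : List ℕ} {i : Fin n} (hi : (i : ℕ) ∉ u) :
    locAddW ℓ u i = ℓ i := by
  induction u generalizing ℓ with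
  | nil => rfl
  | cons a u ih =>
    rw [List.mem_cons, not_or] at hi
    rw [locAddW, ih (locAdd ℓ a) hi.2, locAdd, if_neg hi.1]

def envWeight (Alph : Alphabet) (ℓ : Loc Alph.n B) : ℕ :=
  ∑ i : Fin Alph.n, if Alph.sys i = false then B - ℓ i else 0

lemma envWeight_le (Alph : Alphabet) (ℓ : Loc Alph.n B) : envWeight Alph ℓ ≤ envCard Alph * B :=
  calc envWeight Alph ℓ ≤ ∑ i : Fin Alph.n, if Alph.sys i = false then B else 0 :=
        sum_le_sum fun i _ => by split <;> omega
    _ = ∑ a ∈ range Alph.n, if Alph.sys a = false then B else 0 :=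
        Fin.sum_univ_eq_sum_range (fun a => if Alph.sys a = false then B else 0) _
    _ = envCard Alph * B := by rw [← sum_filter, sum_const, smul_eq_mul, envCard]

lemma envWeight_locAddW_le (Alph : Alphabet) (ℓ : Loc Alph.n B) (u : List ℕ) :
    envWeight Alph (locAddW ℓ u) ≤ envWeight Alph ℓ :=
  sum_le_sum fun i _ => by have := le_locAddW ℓ u i; split <;> omega

lemma envWeight_locAddW_lt {Alph : Alphabet} {ℓ : Loc Alph.n B} {u : List ℕ}
    (hu : isEnvWord Alph u) (hne : locAddW ℓ u ≠ ℓ) :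
    envWeight Alph (locAddW ℓ u) < envWeight Alph ℓ := by
  obtain ⟨i, hi⟩ := Function.ne_iff.mp hne
  have hmem : (i : ℕ) ∈ u := by_contra fun hmem => hi (locAddW_apply_of_notMem ℓ hmem)
  have hle := le_locAddW ℓ u i
  have hne' : (locAddW ℓ u i : ℕ) ≠ ℓ i := fun h => hi (Fin.ext h)
  have hB : (locAddW ℓ u i : ℕ) ≤ B := Nat.lt_succ_iff.mp (locAddW ℓ u i).isLt
  refine sum_lt_sum (fun j _ => ?_) ⟨i, mem_univ i, ?_⟩
  · have := le_locAddW ℓ u j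
    split <;> omega
  · simp only [(hu _ hmem).2, ↓reduceIte]
    omega

lemma tokLe_iff_le {s t : Tok} : tokLe s t ↔ s ≤ t := by
  simp only [tokLe, Prod.le_def]

lemma applyT_add_outm {τ : GTrans n B} {C : GConfig n B} (hτ : applicable τ C) (ℓ : Loc n B) :
    applyT τ C ℓ + outm τ ℓ = C ℓ + inm τ ℓ := by
  rw [applyT, add_right_comm, tsub_add_cancel_of_le (tokLe_iff_le.mp (hτ ℓ))]

lemma applyT_eq_self {τ : GTrans n B} {C : GConfig n B} (hτ : applicable τ C)
    (hdiag : ∀ ℓ ℓ', ℓ ≠ ℓ' → τ ℓ ℓ' = 0) : applyT τ C = C := by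
  funext ℓ
  have hout : outm τ ℓ = τ ℓ ℓ :=
    sum_eq_single ℓ (fun ℓ' _ h => hdiag ℓ ℓ' (Ne.symm h)) (absurd (mem_univ ℓ))
  have hin : inm τ ℓ = τ ℓ ℓ :=
    sum_eq_single ℓ (fun ℓ' _ h => hdiag ℓ' ℓ h) (absurd (mem_univ ℓ))
  have h := applyT_add_outm hτ ℓ
  rw [hout, hin] at h
  exact add_right_cancel h

def weightedMass (p : Tok →+ ℕ) (w : Loc n B → ℕ) (C : GConfig n B) : ℕ :=
  ∑ ℓ, p (C ℓ) * w ℓ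

/-- Stated with both sides moved so that no subtraction occurs. -/
lemma weightedMass_applyT_add (p : Tok →+ ℕ) (w : Loc n B → ℕ) {τ : GTrans n B}
    {C : GConfig n B} (hτ : applicable τ C) :
    weightedMass p w (applyT τ C) + ∑ ℓ, ∑ ℓ', p (τ ℓ ℓ') * w ℓ
      = weightedMass p w C + ∑ ℓ, ∑ ℓ', p (τ ℓ ℓ') * w ℓ' := by
  have hout : ∀ ℓ, ∑ ℓ', p (τ ℓ ℓ') * w ℓ = p (outm τ ℓ) * w ℓ := fun ℓ => by
    rw [outm, map_sum, sum_mul]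
  have hin : ∑ ℓ, ∑ ℓ', p (τ ℓ ℓ') * w ℓ' = ∑ ℓ, p (inm τ ℓ) * w ℓ := by
    rw [sum_comm]
    simp only [inm, map_sum, sum_mul]
  simp only [weightedMass, hout, hin, ← sum_add_distrib, ← add_mul, ← map_add,
    applyT_add_outm hτ]

lemma weightedMass_le (p : Tok →+ ℕ) {w : Loc n B → ℕ} {M : ℕ} (hw : ∀ ℓ, w ℓ ≤ M)
    (C : GConfig n B) : weightedMass p w C ≤ (∑ ℓ, p (C ℓ)) * M := by
  rw [sum_mul]
  exact sum_le_sum fun ℓ _ => Nat.mul_le_mul_left _ (hw ℓ)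

def envTok : Tok →+ ℕ :=
  (AddMonoidHom.fst ℕ ℕ + AddMonoidHom.snd ℕ ℕ).comp (AddMonoidHom.snd ℕ (ℕ × ℕ))

lemma envTok_apply (t : Tok) : envTok t = t.2.1 + t.2.2 := rfl

lemma envTok_pos {t : Tok} (h1 : t.1 = 0) (h0 : t ≠ 0) : 0 < envTok t := by
  obtain ⟨a, b, c⟩ := t
  simp only [envTok_apply]
  simp only [ne_eq, Prod.mk_eq_zero] at h0 h1
  omega

def envPotential (G : PVG) (C : GConfig G.Alph.n G.B) : ℕ :=
  weightedMass envTok (envWeight G.Alph) C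

lemma envPotential_le (G : PVG) (C : GConfig G.Alph.n G.B) :
    envPotential G C
      ≤ (∑ ℓ, (C ℓ).2.1 + ∑ ℓ, (C ℓ).2.2) * envCard G.Alph * G.B := by
  rw [mul_assoc, ← sum_add_distrib]
  exact weightedMass_le envTok (envWeight_le G.Alph) C

lemma envPotential_lt_of_envStep {G : PVG} {C C' : GConfig G.Alph.n G.B}
    (h : envStep G C C') : envPotential G C' < envPotential G C := by
  obtain ⟨hne, τ, hτ, happ, rfl⟩ := h
  have hmono : ∀ ℓ ℓ', envTok (τ ℓ ℓ') * envWeight G.Alph ℓ'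
      ≤ envTok (τ ℓ ℓ') * envWeight G.Alph ℓ := fun ℓ ℓ' => by
    by_cases h0 : τ ℓ ℓ' = 0
    · simp [h0]
    obtain ⟨u, -, rfl⟩ := (hτ ℓ ℓ').2 h0
    exact Nat.mul_le_mul_left _ (envWeight_locAddW_le G.Alph ℓ u)
  obtain ⟨ℓ, ℓ', hℓ, h0⟩ : ∃ ℓ ℓ', ℓ ≠ ℓ' ∧ τ ℓ ℓ' ≠ 0 := by
    by_contra! hdiag
    exact hne (applyT_eq_self happ hdiag).symm
  have hstrict : envTok (τ ℓ ℓ') * envWeight G.Alph ℓ'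
      < envTok (τ ℓ ℓ') * envWeight G.Alph ℓ := by
    obtain ⟨u, hu, hℓ'⟩ := (hτ ℓ ℓ').2 h0
    refine Nat.mul_lt_mul_of_pos_left ?_ (envTok_pos (hτ ℓ ℓ').1 h0)
    rw [hℓ']
    exact envWeight_locAddW_lt hu (hℓ' ▸ hℓ.symm)
  have hflow : ∑ ℓ, ∑ ℓ', envTok (τ ℓ ℓ') * envWeight G.Alph ℓ'
      < ∑ ℓ, ∑ ℓ', envTok (τ ℓ ℓ') * envWeight G.Alph ℓ :=
    sum_lt_sum (fun a _ => sum_le_sum fun b _ => hmono a b)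
      ⟨ℓ, mem_univ ℓ, sum_lt_sum (fun b _ => hmono ℓ b) ⟨ℓ', mem_univ ℓ', hstrict⟩⟩
  have hbal := weightedMass_applyT_add envTok (envWeight G.Alph) happ
  unfold envPotential
  omega

lemma le_of_chain_lt {α : Type*} (f : α → ℕ) (cs : ℕ → α) {d : ℕ}
    (h : ∀ i < d, f (cs (i + 1)) < f (cs i)) : d ≤ f (cs 0) := by
  suffices ∀ i ≤ d, f (cs i) + i ≤ f (cs 0) by have := this d le_rfl; omega
  intro i hi
  induction i with
  | zero => simp
  | succ i ih => have := h i hi; have := ih (by omega); omega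

end ChainBound

/-- Bound on environment chains: if the configuration `C` has `k_e`
environment tokens and `k_se` mixed tokens in total, then every chain
`C = C_0 <_e C_1 <_e … <_e C_d` has length `d ≤ (k_e + k_se)·|A_e|·B`. -/
theorem env_chain_bound (G : PVG) (C : GConfig G.Alph.n G.B) (ke kse d : ℕ)
    (he : ∑ ℓ : Loc G.Alph.n G.B, (C ℓ).2.1 = ke)
    (hse : ∑ ℓ : Loc G.Alph.n G.B, (C ℓ).2.2 = kse)
    (h : hasChain G C d) :
    d ≤ (ke + kse) * envCard G.Alph * G.B := by
  obtain ⟨cs, rfl, hcs⟩ := h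
  calc d ≤ envPotential G (cs 0) :=
        le_of_chain_lt (envPotential G) cs fun i hi => envPotential_lt_of_envStep (hcs i hi)
    _ ≤ (ke + kse) * envCard G.Alph * G.B := he ▸ hse ▸ envPotential_le G (cs 0)

end PSyn
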